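/- The standard bracketing of a Lyndon word is unique: for each Lyndon word u there is exactly one nonassociative word [u] with underlying associative word u that is a standard nonassociative word, i.e., belongs to the largest set SL of bracketed words containing the letters and closed under: (1) if [u] = [[v][w]] ∈ SL then [v],[w] ∈ SL and v > w are Lyndon; (2) if [u] = [[[v1][v2]][w]] ∈ SL then v2 ≤ w. -/

import Mathlib

/-- Lexicographic order where a proper prefix is greater than the word itself. -/
def plex {X : Type*} [LinearOrder X] (u v : List X) : Prop :=
  (∃ w a b x y, a < b ∧ u = w ++ a :: x ∧ v = w ++ b :: y) ∨ (v <+: u ∧ v ≠ u)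

/-- Lyndon (standard) words: `vw > wv` for every factorization into nonempty words. -/
def IsLyndon {X : Type*} [LinearOrder X] (u : List X) : Prop :=
  u ≠ [] ∧ ∀ v w : List X, v ≠ [] → w ≠ [] → u = v ++ w → plex (w ++ v) (v ++ w)

/-- Nonassociative words: binary-tree bracketings of words over `X`. -/
inductive NAW (X : Type*) : Type _
  | leaf : X → NAW X
  | node : NAW X → NAW X → NAW X

/-- The underlying associative word of a nonassociative word. -/
def NAW.flatten {X : Type*} : NAW X → List X
  | .leaf x => [x]
  | .node l r => l.flatten ++ r.flatten

/-- Standard nonassociative words: the largest set `SL` of bracketed words containing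
the letters, such that (1) if `[u] = [[v][w]] ∈ SL` then `[v], [w] ∈ SL` and `v > w` are
Lyndon; (2) if `[u] = [[[v₁][v₂]][w]] ∈ SL` then `v₂ ≤ w`.  Since nonassociative words
are finite trees, this largest set is described by the following recursion. -/
def IsSL {X : Type*} [LinearOrder X] : NAW X → Prop
  | .leaf _ => True
  | .node l r => IsSL l ∧ IsSL r ∧ IsLyndon l.flatten ∧ IsLyndon r.flatten ∧
      plex r.flatten l.flatten ∧
      (match l with
        | .leaf _ => True
        | .node _ l₂ => ¬ plex r.flatten l₂.flatten)

/-!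
For `plex`, a word is Lyndon exactly when it is nonempty and each proper suffix is smaller
than it at a differing letter; in particular Lyndon words have no border.

In a standard bracketing `[[v][w]]` of `u`, the right factor `w` is forced to be the largest
proper suffix of `u`: every proper suffix of `v` is at most `w` (vacuously for a letter, and
for `v = [[v₁][v₂]]` because `v₂` is the largest proper suffix of `v` by induction and
`v₂ ≤ w`), hence every proper suffix `zw` of `u` lies below `w`. So both factors are
determined by `u`.

Conversely, splitting `u = vw` with `w` the largest proper suffix gives Lyndon words `v > w`,
and condition (2) holds for the recursively built bracketing `[[v₁][v₂]]` of `v`: `w < v₂`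
would make `v₂w` a proper suffix of `u` exceeding `w`.
-/

section Words

variable {X : Type*} [LinearOrder X]

def MismatchLT (u v : List X) : Prop :=
  ∃ w a b x y, a < b ∧ u = w ++ a :: x ∧ v = w ++ b :: y

theorem not_mismatchLT_nil_left (v : List X) : ¬ MismatchLT [] v := by
  rintro ⟨w, a, b, x, y, -, hu, -⟩
  simp at hu

theorem not_mismatchLT_nil_right (u : List X) : ¬ MismatchLT u [] := by
  rintro ⟨w, a, b, x, y, -, -, hv⟩
  simp at hv

theorem mismatchLT_cons_cons {a b : X} {u v : List X} :
    MismatchLT (a :: u) (b :: v) ↔ a < b ∨ a = b ∧ MismatchLT u v := by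
  constructor
  · rintro ⟨_ | ⟨c, w⟩, a', b', x, y, hab, hu, hv⟩
    · simp only [List.nil_append, List.cons.injEq] at hu hv
      exact Or.inl (hu.1 ▸ hv.1 ▸ hab)
    · simp only [List.cons_append, List.cons.injEq] at hu hv
      exact Or.inr ⟨hu.1.trans hv.1.symm, w, a', b', x, y, hab, hu.2, hv.2⟩
  · rintro (hab | ⟨rfl, w, a', b', x, y, hab, rfl, rfl⟩)
    · exact ⟨[], a, b, u, v, hab, rfl, rfl⟩
    · exact ⟨a :: w, a', b', x, y, hab, rfl, rfl⟩

theorem MismatchLT.append {u v : List X} (h : MismatchLT u v) (p q : List X) :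
    MismatchLT (u ++ p) (v ++ q) := by
  obtain ⟨w, a, b, x, y, hab, rfl, rfl⟩ := h
  exact ⟨w, a, b, x ++ p, y ++ q, hab, by simp, by simp⟩

theorem mismatchLT_append_left_iff (c : List X) {u v : List X} :
    MismatchLT (c ++ u) (c ++ v) ↔ MismatchLT u v := by
  induction c with
  | nil => rfl
  | cons a c ih => simpa [mismatchLT_cons_cons] using ih

theorem not_mismatchLT_self_append (u y : List X) : ¬ MismatchLT u (u ++ y) := by
  induction u with
  | nil => exact not_mismatchLT_nil_left y
  | cons a u ih => simpa [mismatchLT_cons_cons] using ih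

theorem mismatchLT_irrefl (u : List X) : ¬ MismatchLT u u := by
  simpa using not_mismatchLT_self_append u []

theorem MismatchLT.trans {u v w : List X} (h₁ : MismatchLT u v) (h₂ : MismatchLT v w) :
    MismatchLT u w := by
  induction u generalizing v w with
  | nil => exact absurd h₁ (not_mismatchLT_nil_left v)
  | cons a u ih =>
    obtain _ | ⟨b, v⟩ := v
    · exact absurd h₁ (not_mismatchLT_nil_right _)
    obtain _ | ⟨c, w⟩ := w
    · exact absurd h₂ (not_mismatchLT_nil_right _)
    rw [mismatchLT_cons_cons] at h₁ h₂ ⊢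
    rcases h₁ with h₁ | ⟨rfl, h₁⟩ <;> rcases h₂ with h₂ | ⟨rfl, h₂⟩
    · exact Or.inl (h₁.trans h₂)
    · exact Or.inl h₁
    · exact Or.inl h₂
    · exact Or.inr ⟨rfl, ih h₁ h₂⟩

theorem MismatchLT.asymm {u v : List X} (h₁ : MismatchLT u v) (h₂ : MismatchLT v u) : False :=
  mismatchLT_irrefl u (h₁.trans h₂)

theorem MismatchLT.mismatchLT_or_isPrefix {a b p q : List X} (h : MismatchLT (a ++ p) (b ++ q))
    (hab : a.length ≤ b.length) : MismatchLT a b ∨ a <+: b := by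
  induction a generalizing b with
  | nil => exact Or.inr List.nil_prefix
  | cons x a ih =>
    obtain _ | ⟨y, b⟩ := b
    · simp at hab
    simp only [List.cons_append, mismatchLT_cons_cons] at h
    rcases h with h | ⟨rfl, h⟩
    · exact Or.inl (mismatchLT_cons_cons.2 (Or.inl h))
    · simpa [mismatchLT_cons_cons] using ih h (by simpa using hab)

theorem plex_iff {u v : List X} : plex u v ↔ MismatchLT u v ∨ (v <+: u ∧ v ≠ u) := Iff.rfl

theorem plex_of_mismatchLT {u v : List X} (h : MismatchLT u v) : plex u v := Or.inl h

theorem plex_of_isPrefix {u v : List X} (h : v <+: u) (hne : v ≠ u) : plex u v :=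
  Or.inr ⟨h, hne⟩

theorem plex_nil_right {u : List X} (hu : u ≠ []) : plex u [] :=
  plex_of_isPrefix List.nil_prefix hu.symm

theorem plex_append_self (u : List X) {p : List X} (hp : p ≠ []) : plex (u ++ p) u :=
  plex_of_isPrefix (List.prefix_append u p) (by simpa using hp.symm)

theorem plex.mismatchLT_of_length_le {u v : List X} (h : plex u v) (hl : u.length ≤ v.length) :
    MismatchLT u v := by
  rcases plex_iff.1 h with h | ⟨hp, hne⟩
  · exact h
  · exact absurd (hp.eq_of_length (le_antisymm hp.length_le hl)) hne

theorem plex_cons_cons {a b : X} {u v : List X} :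
    plex (a :: u) (b :: v) ↔ a < b ∨ a = b ∧ plex u v := by
  simp only [plex_iff, mismatchLT_cons_cons, List.cons_prefix_cons, ne_eq, List.cons.injEq]
  constructor
  · rintro ((h | ⟨rfl, h⟩) | ⟨⟨rfl, h⟩, hne⟩)
    · exact Or.inl h
    · exact Or.inr ⟨rfl, Or.inl h⟩
    · exact Or.inr ⟨rfl, Or.inr ⟨h, fun hvu => hne ⟨rfl, hvu⟩⟩⟩
  · rintro (h | ⟨rfl, h | ⟨h, hne⟩⟩)
    · exact Or.inl (Or.inl h)
    · exact Or.inl (Or.inr ⟨rfl, h⟩)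
    · exact Or.inr ⟨⟨rfl, h⟩, fun hvu => hne hvu.2⟩

theorem MismatchLT.plex_of_append {x s z : List X} (h : MismatchLT x (s ++ z)) : plex x s := by
  induction s generalizing x with
  | nil =>
    obtain _ | ⟨a, x⟩ := x
    · exact absurd h (not_mismatchLT_nil_left _)
    · exact plex_nil_right (List.cons_ne_nil a x)
  | cons b s ih =>
    obtain _ | ⟨a, x⟩ := x
    · exact absurd h (not_mismatchLT_nil_left _)
    rw [List.cons_append, mismatchLT_cons_cons] at h
    exact plex_cons_cons.2 (h.imp_right fun ⟨hab, h⟩ => ⟨hab, ih h⟩)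

theorem plex_irrefl (u : List X) : ¬ plex u u := by
  intro h
  rcases plex_iff.1 h with h | ⟨-, hne⟩
  · exact mismatchLT_irrefl u h
  · exact hne rfl

theorem plex_asymm {u v : List X} (h₁ : plex u v) (h₂ : plex v u) : False := by
  rcases plex_iff.1 h₁ with h₁ | ⟨hvu, hne⟩ <;>
    rcases plex_iff.1 h₂ with h₂ | ⟨huv, -⟩
  · exact h₁.asymm h₂
  · obtain ⟨t, rfl⟩ := huv
    exact not_mismatchLT_self_append u t h₁
  · obtain ⟨t, rfl⟩ := hvu
    exact not_mismatchLT_self_append v t h₂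
  · exact hne (hvu.eq_of_length (le_antisymm hvu.length_le huv.length_le))

theorem plex_trans {x y z : List X} (h₁ : plex x y) (h₂ : plex y z) : plex x z := by
  rcases plex_iff.1 h₁ with h₁ | ⟨hyx, hne₁⟩ <;>
    rcases plex_iff.1 h₂ with h₂ | ⟨hzy, hne₂⟩
  · exact plex_of_mismatchLT (h₁.trans h₂)
  · obtain ⟨t, rfl⟩ := hzy
    exact h₁.plex_of_append
  · obtain ⟨t, rfl⟩ := hyx
    simpa using plex_of_mismatchLT (h₂.append t [])
  · refine plex_of_isPrefix (hzy.trans hyx) fun hzx => hne₂ ?_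
    subst hzx
    exact hzy.eq_of_length (le_antisymm hzy.length_le hyx.length_le)

theorem plex_trichotomy (u v : List X) : plex u v ∨ u = v ∨ plex v u := by
  induction u generalizing v with
  | nil =>
    obtain _ | ⟨b, v⟩ := v
    · exact Or.inr (Or.inl rfl)
    · exact Or.inr (Or.inr (plex_nil_right (List.cons_ne_nil b v)))
  | cons a u ih =>
    obtain _ | ⟨b, v⟩ := v
    · exact Or.inl (plex_nil_right (List.cons_ne_nil a u))
    rcases lt_trichotomy a b with h | rfl | h
    · exact Or.inl (plex_cons_cons.2 (Or.inl h))
    · rcases ih v with h | rfl | h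
      · exact Or.inl (plex_cons_cons.2 (Or.inr ⟨rfl, h⟩))
      · exact Or.inr (Or.inl rfl)
      · exact Or.inr (Or.inr (plex_cons_cons.2 (Or.inr ⟨rfl, h⟩)))
    · exact Or.inr (Or.inr (plex_cons_cons.2 (Or.inl h)))

theorem plex_of_plex_of_not_plex {a b c : List X} (hab : plex a b) (hcb : ¬ plex c b) :
    plex a c := by
  rcases plex_trichotomy a c with h | rfl | h
  · exact h
  · exact absurd hab hcb
  · exact absurd (plex_trans h hab) hcb

theorem not_plex_trans {a b c : List X} (hba : ¬ plex b a) (hcb : ¬ plex c b) : ¬ plex c a :=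
  fun hca => hcb (plex_of_plex_of_not_plex hca hba)

end Words

section Lyndon

variable {X : Type*} [LinearOrder X]

theorem IsLyndon.mismatchLT_rotate {u v w : List X} (hu : IsLyndon u) (h : u = v ++ w)
    (hv : v ≠ []) (hw : w ≠ []) : MismatchLT (w ++ v) u := by
  subst h
  exact (hu.2 v w hv hw rfl).mismatchLT_of_length_le (by simp [Nat.add_comm])

theorem IsLyndon.not_border {t s m : List X} (hu : IsLyndon (t ++ s)) (h : t ++ s = s ++ m)
    (ht : t ≠ []) (hs : s ≠ []) : False := by
  have hm : m ≠ [] := by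
    rintro rfl
    exact ht (by simpa using h)
  have hlen : m.length = t.length := by
    have := congrArg List.length h
    simp only [List.length_append] at this
    omega
  have htm : MismatchLT t m := by
    have := hu.mismatchLT_rotate rfl ht hs
    rwa [h, mismatchLT_append_left_iff] at this
  rcases (hu.mismatchLT_rotate h hs hm).mismatchLT_or_isPrefix hlen.le with hmt | hmt
  · exact htm.asymm hmt
  · rw [hmt.eq_of_length hlen] at htm
    exact mismatchLT_irrefl t htm

theorem IsLyndon.mismatchLT_of_eq_append {u t s : List X} (hu : IsLyndon u) (h : u = t ++ s)
    (ht : t ≠ []) (hs : s ≠ []) : MismatchLT s u := by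
  have hrot : MismatchLT (s ++ t) (u ++ []) := by simpa using hu.mismatchLT_rotate h ht hs
  rcases hrot.mismatchLT_or_isPrefix (by simp [h]) with hsu | ⟨m, hm⟩
  · exact hsu
  · subst h
    exact (hu.not_border hm.symm ht hs).elim

theorem isLyndon_of_mismatchLT {u : List X} (hu : u ≠ [])
    (h : ∀ t s, t ≠ [] → s ≠ [] → u = t ++ s → MismatchLT s u) : IsLyndon u := by
  refine ⟨hu, fun v w hv hw huvw => ?_⟩
  subst huvw
  simpa using plex_of_mismatchLT ((h v w hv hw rfl).append v [])

theorem IsLyndon.plex_of_append {v w : List X} (hu : IsLyndon (v ++ w)) (hv : v ≠ [])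
    (hw : w ≠ []) : plex w v :=
  (hu.mismatchLT_of_eq_append rfl hv hw).plex_of_append

theorem IsLyndon.mismatchLT_append_self {x y : List X} (hy : IsLyndon y) (hx : x ≠ [])
    (h : plex y x) : MismatchLT y (x ++ y) := by
  rcases plex_iff.1 h with h | ⟨⟨z, rfl⟩, hne⟩
  · simpa using h.append [] y
  · have hz : z ≠ [] := by
      rintro rfl
      simp at hne
    exact (mismatchLT_append_left_iff x).2 (hy.mismatchLT_of_eq_append rfl hx hz)

end Lyndon

section MaxSuffix

variable {X : Type*} [LinearOrder X]

def IsMaxSuffix (w l : List X) : Prop :=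
  w <:+ l ∧ w ≠ [] ∧ ∀ s, s <:+ l → s ≠ [] → ¬ plex w s

theorem IsMaxSuffix.unique {w w' l : List X} (h : IsMaxSuffix w l) (h' : IsMaxSuffix w' l) :
    w = w' := by
  rcases plex_trichotomy w w' with hlt | heq | hgt
  · exact absurd hlt (h.2.2 w' h'.1 h'.2.1)
  · exact heq
  · exact absurd hgt (h'.2.2 w h.1 h.2.1)

theorem exists_isMaxSuffix : ∀ l : List X, l ≠ [] → ∃ w, IsMaxSuffix w l
  | [], hl => absurd rfl hl
  | [x], _ => ⟨[x], List.suffix_refl _, List.cons_ne_nil _ _, fun s hs hne => by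
      rcases List.suffix_cons_iff.1 hs with rfl | hs
      · exact plex_irrefl _
      · exact absurd (List.suffix_nil.1 hs) hne⟩
  | x :: y :: l, _ => by
    obtain ⟨m, hm, hmne, hmax⟩ := exists_isMaxSuffix (y :: l) (List.cons_ne_nil _ _)
    by_cases hlt : plex (x :: y :: l) m
    · refine ⟨m, hm.trans (List.suffix_cons _ _), hmne, fun s hs hne => ?_⟩
      rcases List.suffix_cons_iff.1 hs with rfl | hs
      · exact fun h => plex_asymm h hlt
      · exact hmax s hs hne
    · refine ⟨x :: y :: l, List.suffix_refl _, List.cons_ne_nil _ _, fun s hs hne => ?_⟩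
      rcases List.suffix_cons_iff.1 hs with rfl | hs
      · exact plex_irrefl _
      · exact not_plex_trans (hmax s hs hne) hlt

theorem IsMaxSuffix.isLyndon {w l : List X} (h : IsMaxSuffix w l) : IsLyndon w := by
  obtain ⟨hwl, hw, hmax⟩ := h
  refine isLyndon_of_mismatchLT hw fun t s ht hs hts => ?_
  have hlen : s.length < w.length := by simp [hts, List.length_pos_iff.2 ht]
  rcases plex_trichotomy s w with h | rfl | h
  · exact h.mismatchLT_of_length_le hlen.le
  · exact absurd hlen (lt_irrefl _)
  · exact absurd h (hmax s ((hts ▸ List.suffix_append t s).trans hwl) hs)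

theorem IsMaxSuffix.not_plex_of_append_isSuffix {w l s : List X} (h : IsMaxSuffix w l)
    (hs : s ≠ []) (hsw : s ++ w <:+ l) : ¬ plex w s := fun hws =>
  h.2.2 _ hsw (by simp [hs]) (plex_of_mismatchLT (h.isLyndon.mismatchLT_append_self hs hws))

theorem isMaxSuffix_append {v w : List X} (hw : IsLyndon w)
    (hv : ∀ z, z <:+ v → z ≠ [] → ¬ plex w z) : IsMaxSuffix w (v ++ w) := by
  refine ⟨List.suffix_append v w, hw.1, fun s hs hne => ?_⟩
  rcases List.suffix_or_suffix_of_suffix hs (List.suffix_append v w) with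
    ⟨t, rfl⟩ | ⟨z, rfl⟩
  · obtain rfl | ht := eq_or_ne t []
    · simpa using plex_irrefl s
    · exact fun h => plex_asymm h (plex_of_mismatchLT (hw.mismatchLT_of_eq_append rfl ht hne))
  · obtain rfl | hz := eq_or_ne z []
    · simpa using plex_irrefl w
    · have hzw := plex_of_plex_of_not_plex (plex_append_self z hw.1)
        (hv z (List.suffix_append_self_iff.1 hs) hz)
      exact fun h => plex_asymm h hzw

theorem IsLyndon.isLyndon_left {v w : List X} (hu : IsLyndon (v ++ w)) (hv : v ≠ [])
    (hw : IsMaxSuffix w (v ++ w).tail) : IsLyndon v := by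
  refine isLyndon_of_mismatchLT hv fun t s ht hs hts => ?_
  have hu' : v ++ w = t ++ (s ++ w) := by rw [hts, List.append_assoc]
  have hsw : MismatchLT (s ++ w) (v ++ w) := hu.mismatchLT_of_eq_append hu' ht (by simp [hs])
  rcases hsw.mismatchLT_or_isPrefix (by simp [hts]) with h | ⟨m, hm⟩
  · exact h
  · have hws : plex w s := by
      have := hu.mismatchLT_of_eq_append rfl hv hw.2.1
      rw [← hm, List.append_assoc] at this
      exact this.plex_of_append
    refine absurd hws (hw.not_plex_of_append_isSuffix hs ?_)
    rw [hu', List.tail_append_of_ne_nil ht]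
    exact List.suffix_append _ _

end MaxSuffix

theorem NAW.flatten_ne_nil {X : Type*} : ∀ t : NAW X, t.flatten ≠ []
  | .leaf _ => List.cons_ne_nil _ _
  | .node l _ => by simp [NAW.flatten, NAW.flatten_ne_nil l]

theorem NAW.flatten_node_ne_singleton {X : Type*} (l r : NAW X) (a : X) :
    (NAW.node l r).flatten ≠ [a] := by
  simp [NAW.flatten, List.append_eq_singleton_iff, NAW.flatten_ne_nil]

section Standard

variable {X : Type*} [LinearOrder X]

theorem IsSL.isMaxSuffix_right {l r : NAW X} (h : IsSL (.node l r)) :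
    IsMaxSuffix r.flatten (l.flatten ++ r.flatten).tail := by
  induction l generalizing r with
  | leaf a => exact isMaxSuffix_append h.2.2.2.1 fun z hz hne => absurd (List.suffix_nil.1 hz) hne
  | node l₁ l₂ ih _ =>
    obtain ⟨hl, -, -, hr, -, h₂⟩ := h
    rw [List.tail_append_of_ne_nil (NAW.flatten_ne_nil _)]
    exact isMaxSuffix_append hr fun z hz hne => not_plex_trans ((ih hl).2.2 z hz hne) h₂

theorem IsSL.eq_of_flatten_eq {t t' : NAW X} (h : IsSL t) (h' : IsSL t')
    (hflat : t.flatten = t'.flatten) : t = t' := by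
  induction t generalizing t' with
  | leaf a =>
    cases t' with
    | leaf b => simpa [NAW.flatten] using hflat
    | node l' r' => exact absurd hflat.symm (NAW.flatten_node_ne_singleton l' r' a)
  | node l r ihl ihr =>
    cases t' with
    | leaf b => exact absurd hflat (NAW.flatten_node_ne_singleton l r b)
    | node l' r' =>
      have hflat' : l.flatten ++ r.flatten = l'.flatten ++ r'.flatten := hflat
      have hr : r.flatten = r'.flatten :=
        h.isMaxSuffix_right.unique (hflat' ▸ h'.isMaxSuffix_right)
      have hl : l.flatten = l'.flatten := List.append_cancel_right (hr ▸ hflat')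
      rw [ihl h.1 h'.1 hl, ihr h.2.1 h'.2.1 hr]

theorem exists_isSL_flatten_eq :
    ∀ u : List X, IsLyndon u → ∃ t : NAW X, t.flatten = u ∧ IsSL t
  | [], hu => absurd rfl hu.1
  | [x], _ => ⟨.leaf x, rfl, trivial⟩
  | x :: y :: l, hu => by
    obtain ⟨w, hw⟩ := exists_isMaxSuffix (y :: l) (List.cons_ne_nil y l)
    obtain ⟨c, hc⟩ := hw.1
    rw [← hc] at hw
    rw [← hc, ← List.cons_append] at hu
    have hv : IsLyndon (x :: c) := hu.isLyndon_left (List.cons_ne_nil x c) hw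
    have hwL : IsLyndon w := hw.isLyndon
    -- the recursive calls are on the shorter words `x :: c` and `w`
    have hlen : c.length + w.length = l.length + 1 := by simpa using congrArg List.length hc
    have hwpos : 0 < w.length := List.length_pos_iff.2 hwL.1
    obtain ⟨tv, htv, hSLv⟩ := exists_isSL_flatten_eq (x :: c) hv
    obtain ⟨tw, rfl, hSLw⟩ := exists_isSL_flatten_eq w hwL
    refine ⟨.node tv tw, by simp [NAW.flatten, htv, hc], hSLv, hSLw, htv ▸ hv, hwL,
      htv ▸ hu.plex_of_append hv.1 hwL.1, ?_⟩
    cases tv with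
    | leaf _ => trivial
    | node t₁ t₂ =>
      have h₂ := hSLv.isMaxSuffix_right
      rw [show t₁.flatten ++ t₂.flatten = x :: c from htv] at h₂
      exact hw.not_plex_of_append_isSuffix (NAW.flatten_ne_nil t₂)
        (List.suffix_append_self_iff.2 h₂.1)
termination_by u => u.length

end Standard

/-- The standard bracketing of a Lyndon word is unique: for each Lyndon word `u` there
is exactly one standard nonassociative word with underlying associative word `u`. -/
theorem standard_bracketing_unique {X : Type*} [LinearOrder X] (u : List X)
    (hu : IsLyndon u) :
    ∃! t : NAW X, t.flatten = u ∧ IsSL t := by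
  obtain ⟨t, ht, hSL⟩ := exists_isSL_flatten_eq u hu
  exact ⟨t, ⟨ht, hSL⟩, fun t' ⟨ht', hSL'⟩ =>
    hSL'.eq_of_flatten_eq hSL (ht'.trans ht.symm)⟩
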